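/- arXiv:2308.15598 — 2 statements merged into one kernel-verified Lean document; each statement's English description precedes it below -/
import Mathlib

section
/- Let (α, S, β) be a reducible decomposition of the facet family 𝓕 and let p ∈ Δ_R have strictly positive S-marginal p_S. Suppose v ∈ Q^α_{p_α} maximizes D_{M_{𝓕_α}} over Q^α_{p_α}, w ∈ Q^β_{p_β} maximizes D_{M_{𝓕_β}} over Q^β_{p_β}, and p' ∈ Q_p maximizes D_{M_𝓕} over Q_p. Then D_{M_𝓕}(p') ≥ D_{M_{𝓕_α}}(v) + D_{M_{𝓕_β}}(w). -/
open scoped BigOperators Pointwise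

attribute [local instance] Classical.propDecidable

def simplex (ι : Type*) [Fintype ι] : Set (ι → ℝ) :=
  {p | (∀ i, 0 ≤ p i) ∧ ∑ i, p i = 1}

noncomputable def KL {ι : Type*} [Fintype ι] (p q : ι → ℝ) : EReal :=
  if ∀ i, q i = 0 → p i = 0 then (((∑ i, p i * Real.log (p i / q i)) : ℝ) : EReal) else ⊤

noncomputable def divFrom {ι : Type*} [Fintype ι] (M : Set (ι → ℝ)) (p : ι → ℝ) : EReal :=
  ⨅ q ∈ M, KL p q

/-- The `F`-marginal of a function on the full state space `∀ i, Fin (d i)`. -/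
noncomputable def margF {m : ℕ} (d : Fin m → ℕ) (F : Finset (Fin m))
    (p : (∀ i, Fin (d i)) → ℝ) : ((i : {j // j ∈ F}) → Fin (d i.1)) → ℝ :=
  fun y => ∑ x : ∀ i, Fin (d i), if (∀ i : {j // j ∈ F}, x i.1 = y i) then p x else 0

/-- The `F`-marginal of a function on the partial state space indexed by `α` (meant for
`F ⊆ α`; indices of `F` outside `α` are ignored). -/
noncomputable def margSub {m : ℕ} (d : Fin m → ℕ) (α F : Finset (Fin m))
    (u : ((i : {j // j ∈ α}) → Fin (d i.1)) → ℝ) :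
    ((i : {j // j ∈ F}) → Fin (d i.1)) → ℝ :=
  fun y => ∑ xa : (i : {j // j ∈ α}) → Fin (d i.1),
    if (∀ (i : Fin m) (hiF : i ∈ F) (hia : i ∈ α), xa ⟨i, hia⟩ = y ⟨i, hiF⟩)
      then u xa else 0

/-- The hierarchical log-linear model with facet family `𝓕` on the full state space. -/
noncomputable def hierModel {m : ℕ} (d : Fin m → ℕ) (𝓕 : Finset (Finset (Fin m))) :
    Set ((∀ i, Fin (d i)) → ℝ) :=
  {p | p ∈ simplex (∀ i, Fin (d i)) ∧
    ∃ θ : (F : {F // F ∈ 𝓕}) → (((i : {j // j ∈ F.1}) → Fin (d i.1)) → ℝ),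
      (∀ F y, 0 < θ F y) ∧ ∃ Z : ℝ, 0 < Z ∧
        ∀ x, p x = (1 / Z) * ∏ F : {F // F ∈ 𝓕}, θ F (fun i => x i.1)}

/-- The hierarchical log-linear model on the partial state space indexed by `α`, for a facet
family `𝓕'` all of whose members are contained in `α`. -/
noncomputable def hierModelSub {m : ℕ} (d : Fin m → ℕ) (α : Finset (Fin m))
    (𝓕' : Finset (Finset (Fin m))) (h : ∀ F ∈ 𝓕', F ⊆ α) :
    Set (((i : {j // j ∈ α}) → Fin (d i.1)) → ℝ) :=
  {p | p ∈ simplex ((i : {j // j ∈ α}) → Fin (d i.1)) ∧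
    ∃ θ : (F : {F // F ∈ 𝓕'}) → (((i : {j // j ∈ F.1}) → Fin (d i.1)) → ℝ),
      (∀ F y, 0 < θ F y) ∧ ∃ Z : ℝ, 0 < Z ∧
        ∀ xa, p xa = (1 / Z) * ∏ F : {F // F ∈ 𝓕'},
          θ F (fun i => xa ⟨i.1, h F.1 F.2 i.2⟩)}

/-!
Since `α ∪ β = [m]`, a configuration on `[m]` is the same as a pair of configurations on `α` and
on `β` that agree on `S = α ∩ β`: `R` is the fibre product `R_α ×_{R_S} R_β`. Glue `v` and `w`
along `S` into `u(x) = v(x_α) w(x_β) / p_S(x_S)`. Through the facets `F₁, F₂ ⊇ S`, both `v` and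
`w` have `S`-marginal `p_S`, so `u` has marginals `v` and `w`; hence `u ∈ Q_p` and
`D_{M_𝓕}(u) ≤ D_{M_𝓕}(p')`.

Every `q ∈ M_𝓕` factors as `q(x) = f(x_α) g(x_β)` with `f`, `g` products of facet potentials.
If `A` is the `S`-marginal of `f`, then `r_α = f · p_S / A` and `r_β = A · g` only change the
potentials of `F₁` and `F₂`, so `r_α ∈ M_{𝓕_α}` and `r_β ∈ M_{𝓕_β}`; and `r_α r_β = p_S q` along
`S`, which splits `D(u ‖ q) = D(v ‖ r_α) + D(w ‖ r_β) ≥ D_{M_{𝓕_α}}(v) + D_{M_{𝓕_β}}(w)`.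
Finally `q ↦ D(u ‖ q)` is continuous wherever it is finite, so passing to the closure of `M_𝓕`
does not change the infimum.
-/

open Finset

section FiberSum

variable {X Y S : Type*} [Fintype X]

noncomputable def fiberSum (π : X → Y) (f : X → ℝ) (y : Y) : ℝ :=
  ∑ x with π x = y, f x

theorem fiberSum_apply (π : X → Y) (f : X → ℝ) (y : Y) :
    fiberSum π f y = ∑ x, if π x = y then f x else 0 :=
  Finset.sum_filter _ _

theorem sum_fiberSum [Fintype Y] (π : X → Y) (f : X → ℝ) :
    ∑ y, fiberSum π f y = ∑ x, f x :=
  Finset.sum_fiberwise univ π f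

theorem fiberSum_mul_comp (π : X → Y) (f : X → ℝ) (h : Y → ℝ) (y : Y) :
    fiberSum π (fun x => f x * h (π x)) y = fiberSum π f y * h y := by
  rw [fiberSum, fiberSum, Finset.sum_mul]
  exact Finset.sum_congr rfl fun x hx => by rw [(mem_filter.mp hx).2]

theorem sum_mul_comp [Fintype Y] (π : X → Y) (f : X → ℝ) (h : Y → ℝ) :
    ∑ x, f x * h (π x) = ∑ y, fiberSum π f y * h y := by
  simp_rw [← sum_fiberSum π, fiberSum_mul_comp]

theorem fiberSum_fiberSum [Fintype Y] [Fintype S] (π : X → Y) (σ : Y → S) (f : X → ℝ) :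
    fiberSum σ (fiberSum π f) = fiberSum (σ ∘ π) f := by
  funext s
  simp only [fiberSum, Function.comp_apply]
  rw [← Finset.sum_fiberwise_of_maps_to (s := univ.filter fun x => σ (π x) = s)
    (t := univ.filter fun y => σ y = s) (g := π) (fun x hx => by simpa using hx)]
  refine Finset.sum_congr rfl fun y hy => Finset.sum_congr ?_ fun _ _ => rfl
  ext x
  simp only [mem_filter, mem_univ, true_and]
  exact ⟨fun hx => ⟨hx ▸ (mem_filter.mp hy).2, hx⟩, And.right⟩

theorem fiberSum_nonneg {π : X → Y} {f : X → ℝ} (hf : ∀ x, 0 ≤ f x) (y : Y) :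
    0 ≤ fiberSum π f y :=
  Finset.sum_nonneg fun x _ => hf x

theorem fiberSum_pos_of_ne_zero {π : X → Y} {f g : X → ℝ} {y : Y} (hf : ∀ x, 0 < f x)
    (hg : fiberSum π g y ≠ 0) : 0 < fiberSum π f y := by
  obtain ⟨x, hx, -⟩ := Finset.exists_ne_zero_of_sum_ne_zero hg
  exact Finset.sum_pos (fun x _ => hf x) ⟨x, hx⟩

theorem sum_mul_div_fiberSum [Fintype Y] (π : X → Y) (f : X → ℝ) (h : Y → ℝ)
    (hf : ∀ y, fiberSum π f y ≠ 0) :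
    ∑ x, f x * (h (π x) / fiberSum π f (π x)) = ∑ y, h y := by
  rw [sum_mul_comp π f fun y => h y / fiberSum π f y]
  exact Finset.sum_congr rfl fun y _ => mul_div_cancel₀ _ (hf y)

theorem mul_div_fiberSum_mem_simplex [Fintype Y] [Fintype S] {σ : Y → S} {v f : Y → ℝ}
    {pS : S → ℝ} (hv : v ∈ simplex Y) (hpS : ∀ s, pS s ≠ 0) (hvS : fiberSum σ v = pS)
    (hf : ∀ y, 0 < f y) : (fun y => f y * (pS (σ y) / fiberSum σ f (σ y))) ∈ simplex Y := by
  have hA : ∀ s, 0 < fiberSum σ f s := fun s =>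
    fiberSum_pos_of_ne_zero hf (by rw [hvS]; exact hpS s)
  refine ⟨fun y => mul_nonneg (hf y).le (div_nonneg ?_ (hA _).le), ?_⟩
  · rw [← hvS]
    exact fiberSum_nonneg hv.1 _
  · rw [sum_mul_div_fiberSum σ f pS fun s => (hA s).ne', ← hvS, sum_fiberSum, hv.2]

end FiberSum

section KL

open Filter Topology

variable {ι : Type*} [Fintype ι]

theorem KL_of_ne_zero (p : ι → ℝ) {q : ι → ℝ} (hq : ∀ i, q i ≠ 0) :
    KL p q = ((∑ i, p i * Real.log (p i / q i) : ℝ) : EReal) :=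
  if_pos fun i hi => absurd hi (hq i)

theorem tendsto_KL {p q : ι → ℝ} (hpq : ∀ i, q i = 0 → p i = 0) :
    Tendsto (KL p) (𝓝 q) (𝓝 (KL p q)) := by
  have hne : ∀ᶠ q' in 𝓝 q, ∀ i, q' i = 0 → p i = 0 := by
    refine eventually_all.mpr fun i => ?_
    by_cases hp : p i = 0
    · exact Eventually.of_forall fun _ _ => hp
    · filter_upwards [(continuous_apply i).continuousAt.eventually_ne
        (mt (hpq i) hp)] with q' hq' h using absurd h hq'
  have hsum : ContinuousAt (fun q' : ι → ℝ => ∑ i, p i * Real.log (p i / q' i)) q := by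
    refine tendsto_finsetSum _ fun i _ => ?_
    by_cases hp : p i = 0
    · simp only [hp, zero_mul]
      exact continuousAt_const
    · have hq : q i ≠ 0 := mt (hpq i) hp
      exact continuousAt_const.mul
        ((continuousAt_const.div (continuous_apply i).continuousAt hq).log (div_ne_zero hp hq))
  rw [KL, if_pos hpq]
  refine (continuous_coe_real_ereal.continuousAt.comp hsum).tendsto.congr' ?_
  filter_upwards [hne] with q' hq'
  rw [KL, if_pos hq']
  rfl

theorem divFrom_closure (M : Set (ι → ℝ)) (p : ι → ℝ) :
    divFrom (closure M) p = divFrom M p := by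
  refine le_antisymm (biInf_mono fun _ hq => subset_closure hq) (le_iInf₂ fun q hq => ?_)
  by_cases hpq : ∀ i, q i = 0 → p i = 0
  · have := mem_closure_iff_nhdsWithin_neBot.mp hq
    exact ge_of_tendsto ((tendsto_KL hpq).mono_left nhdsWithin_le_nhds)
      (eventually_nhdsWithin_of_forall fun q' hq' => iInf₂_le q' hq')
  · rw [KL, if_neg hpq]
    exact le_top

end KL

section Glue

variable {X Y Z S : Type*} [Fintype X] {sY : Y → S} {sZ : Z → S}
  (e : X ≃ Function.Pullback sY sZ)

theorem fiberSum_fst_comp_snd [Fintype Z] (g : Z → ℝ) (y : Y) :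
    fiberSum (fun x => (e x).fst) (fun x => g (e x).snd) y = fiberSum sZ g (sY y) := by
  refine Finset.sum_bij' (fun x _ => (e x).snd)
    (fun z hz => e.symm ⟨(y, z), (mem_filter.mp hz).2.symm⟩) ?_ ?_ ?_ ?_ fun _ _ => rfl
  · intro x hx
    simp only [mem_filter, mem_univ, true_and] at hx ⊢
    rw [← hx]
    exact (e x).2.symm
  · intro z _
    simp only [mem_filter, mem_univ, true_and, Equiv.apply_symm_apply]
    rfl
  · intro x hx
    simp only [mem_filter, mem_univ, true_and] at hx
    rw [Equiv.symm_apply_eq]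
    exact Subtype.ext (Prod.ext hx.symm rfl)
  · intro z _
    simp only [Equiv.apply_symm_apply]
    rfl

theorem fiberSum_snd_comp_fst [Fintype Y] (f : Y → ℝ) (z : Z) :
    fiberSum (fun x => (e x).snd) (fun x => f (e x).fst) z = fiberSum sY f (sZ z) := by
  refine Finset.sum_bij' (fun x _ => (e x).fst)
    (fun y hy => e.symm ⟨(y, z), (mem_filter.mp hy).2⟩) ?_ ?_ ?_ ?_ fun _ _ => rfl
  · intro x hx
    simp only [mem_filter, mem_univ, true_and] at hx ⊢
    rw [← hx]
    exact (e x).2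
  · intro y _
    simp only [mem_filter, mem_univ, true_and, Equiv.apply_symm_apply]
    rfl
  · intro x hx
    simp only [mem_filter, mem_univ, true_and] at hx
    rw [Equiv.symm_apply_eq]
    exact Subtype.ext (Prod.ext rfl hx.symm)
  · intro y _
    simp only [Equiv.apply_symm_apply]
    rfl

theorem sum_fst_mul_snd [Fintype Y] [Fintype Z] (f : Y → ℝ) (g : Z → ℝ) :
    ∑ x, f (e x).fst * g (e x).snd = ∑ z, fiberSum sY f (sZ z) * g z := by
  rw [sum_mul_comp (fun x => (e x).snd) (fun x => f (e x).fst) g]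
  simp_rw [fiberSum_snd_comp_fst]

theorem fiberSum_mul_mem_simplex [Fintype Y] [Fintype Z] {f : Y → ℝ} {g : Z → ℝ}
    (hf : ∀ y, 0 ≤ f y) (hg : ∀ z, 0 ≤ g z)
    (hfg : (fun x => f (e x).fst * g (e x).snd) ∈ simplex X) :
    (fun z => fiberSum sY f (sZ z) * g z) ∈ simplex Z :=
  ⟨fun z => mul_nonneg (fiberSum_nonneg hf _) (hg z), (sum_fst_mul_snd e f g).symm.trans hfg.2⟩

noncomputable def glue (pS : S → ℝ) (v : Y → ℝ) (w : Z → ℝ) (x : X) : ℝ :=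
  v (e x).fst * w (e x).snd / pS (sY (e x).fst)

variable {pS : S → ℝ} {v : Y → ℝ} {w : Z → ℝ}

theorem fiberSum_fst_glue [Fintype Z] (hpS : ∀ s, pS s ≠ 0) (hw : fiberSum sZ w = pS) :
    fiberSum (fun x => (e x).fst) (glue e pS v w) = v := by
  have hglue : glue e pS v w = fun x => w (e x).snd * (v (e x).fst / pS (sY (e x).fst)) := by
    funext x
    rw [glue]
    ring
  funext y
  rw [hglue, fiberSum_mul_comp (fun x => (e x).fst) _ fun y => v y / pS (sY y),
    fiberSum_fst_comp_snd, hw, mul_div_cancel₀ _ (hpS _)]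

theorem fiberSum_snd_glue [Fintype Y] (hpS : ∀ s, pS s ≠ 0) (hv : fiberSum sY v = pS) :
    fiberSum (fun x => (e x).snd) (glue e pS v w) = w := by
  have hglue : glue e pS v w = fun x => (v (e x).fst / pS (sY (e x).fst)) * w (e x).snd := by
    funext x
    rw [glue]
    ring
  have hfiber : ∀ s, fiberSum sY (fun y => v y / pS (sY y)) s = 1 := fun s => by
    simp_rw [div_eq_mul_inv]
    rw [fiberSum_mul_comp sY v fun s => (pS s)⁻¹, hv, mul_inv_cancel₀ (hpS s)]
  funext z
  rw [hglue, fiberSum_mul_comp (fun x => (e x).snd) _ w,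
    fiberSum_snd_comp_fst e (fun y => v y / pS (sY y)), hfiber, one_mul]

theorem glue_mem_simplex [Fintype Y] [Fintype Z] (hpS : ∀ s, 0 < pS s) (hv : v ∈ simplex Y)
    (hw : w ∈ simplex Z) (hwS : fiberSum sZ w = pS) : glue e pS v w ∈ simplex X := by
  refine ⟨fun x => div_nonneg (mul_nonneg (hv.1 _) (hw.1 _)) (hpS _).le, ?_⟩
  rw [← sum_fiberSum fun x => (e x).fst, fiberSum_fst_glue e (fun s => (hpS s).ne') hwS]
  exact hv.2

theorem KL_glue_eq [Fintype Y] [Fintype Z] (hpS : ∀ s, pS s ≠ 0) (hvS : fiberSum sY v = pS)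
    (hwS : fiberSum sZ w = pS)
    {f : Y → ℝ} {g : Z → ℝ} (hf : ∀ y, 0 < f y) (hg : ∀ z, 0 < g z) :
    KL (glue e pS v w) (fun x => f (e x).fst * g (e x).snd) =
      KL v (fun y => f y * (pS (sY y) / fiberSum sY f (sY y))) +
        KL w (fun z => fiberSum sY f (sZ z) * g z) := by
  have hA : ∀ s, 0 < fiberSum sY f s := fun s =>
    fiberSum_pos_of_ne_zero hf (by rw [hvS]; exact hpS s)
  set rY : Y → ℝ := fun y => f y * (pS (sY y) / fiberSum sY f (sY y))
  set rZ : Z → ℝ := fun z => fiberSum sY f (sZ z) * g z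
  have hrY : ∀ y, rY y ≠ 0 := fun y => mul_ne_zero (hf y).ne' (div_ne_zero (hpS _) (hA _).ne')
  have hrZ : ∀ z, 0 < rZ z := fun z => mul_pos (hA _) (hg z)
  have hlog : ∀ x, glue e pS v w x * Real.log (glue e pS v w x / (f (e x).fst * g (e x).snd)) =
      glue e pS v w x * Real.log (v (e x).fst / rY (e x).fst) +
        glue e pS v w x * Real.log (w (e x).snd / rZ (e x).snd) := by
    intro x
    by_cases hu : glue e pS v w x = 0
    · simp [hu]
    have hv0 : v (e x).fst ≠ 0 := fun h => hu (by simp [glue, h])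
    have hw0 : w (e x).snd ≠ 0 := fun h => hu (by simp [glue, h])
    -- `rY` and `rZ` are evaluated over the same point of `S`, where `pS / A` and `A` cancel
    have hcomm : sZ (e x).snd = sY (e x).fst := (e x).2.symm
    have hratio : glue e pS v w x / (f (e x).fst * g (e x).snd) =
        v (e x).fst / rY (e x).fst * (w (e x).snd / rZ (e x).snd) := by
      simp only [glue, rY, rZ, hcomm]
      have := hpS (sY (e x).fst)
      have := (hA (sY (e x).fst)).ne'
      have := (hf (e x).fst).ne'
      have := (hg (e x).snd).ne'
      field_simp
    rw [hratio, Real.log_mul (div_ne_zero hv0 (hrY _)) (div_ne_zero hw0 (hrZ _).ne'), mul_add]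
  rw [KL_of_ne_zero _ fun x => (mul_pos (hf _) (hg _)).ne', KL_of_ne_zero _ hrY,
    KL_of_ne_zero _ fun z => (hrZ z).ne', ← EReal.coe_add, Finset.sum_congr rfl fun x _ => hlog x,
    Finset.sum_add_distrib,
    sum_mul_comp (fun x => (e x).fst) _ fun y => Real.log (v y / rY y),
    sum_mul_comp (fun x => (e x).snd) _ fun z => Real.log (w z / rZ z),
    fiberSum_fst_glue e hpS hwS, fiberSum_snd_glue e hpS hvS]

end Glue

section Restrict

variable {ι : Type*} [Fintype ι] [DecidableEq ι] {π : ι → Type*}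

noncomputable def equivPullbackRestrict₂ {s t : Finset ι} (hst : s ∪ t = univ) :
    (∀ i, π i) ≃ Function.Pullback (restrict₂ (π := π) (inter_subset_left : s ∩ t ⊆ s))
      (restrict₂ inter_subset_right) where
  toFun x := ⟨(s.restrict x, t.restrict x), rfl⟩
  invFun y i := if h : i ∈ s then y.fst ⟨i, h⟩ else
    y.snd ⟨i, (mem_union.mp (hst ▸ mem_univ i)).resolve_left h⟩
  left_inv x := funext fun i => by
    by_cases h : i ∈ s <;> simp [h, Function.Pullback.fst, Function.Pullback.snd]
  right_inv y := by
    refine Subtype.ext (Prod.ext (funext fun i => by simp [Function.Pullback.fst]) ?_)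
    funext i
    by_cases h : i.1 ∈ s
    · simpa [h, Function.Pullback.fst] using congrFun y.2 ⟨i.1, mem_inter.mpr ⟨h, i.2⟩⟩
    · simp [h, Function.Pullback.snd]

end Restrict

theorem prod_coe_sort_eq_prod_dite {ι M : Type*} [DecidableEq ι] [CommMonoid M]
    {s t : Finset ι} (hst : s ⊆ t) (g : {x // x ∈ t} → M) :
    ∏ x : {x // x ∈ s}, g ⟨x.1, hst x.2⟩ = ∏ x ∈ s, if h : x ∈ t then g ⟨x, h⟩ else 1 := by
  rw [← prod_coe_sort s fun x => if h : x ∈ t then g ⟨x, h⟩ else 1]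
  exact prod_congr rfl fun x _ => by rw [dif_pos (hst x.2)]

theorem prod_eq_mul_prod_of_subset_or_subset {ι M : Type*} [DecidableEq ι] [CommMonoid M]
    {𝓕 : Finset (Finset ι)} {α β : Finset ι} (hsplit : ∀ F ∈ 𝓕, F ⊆ α ∨ F ⊆ β)
    (Θ : Finset ι → M) :
    ∏ F ∈ 𝓕, Θ F =
      (∏ F ∈ 𝓕.filter (· ⊆ α), Θ F) * ∏ F ∈ 𝓕.filter (· ⊆ β), if F ⊆ α then 1 else Θ F := by
  have hfilter :
      𝓕.filter (fun F => ¬ F ⊆ α) = (𝓕.filter (· ⊆ β)).filter (fun F => ¬ F ⊆ α) := by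
    rw [filter_filter]
    exact filter_congr fun F hF => ⟨fun h => ⟨(hsplit F hF).resolve_left h, h⟩, And.right⟩
  simp_rw [← prod_filter_mul_prod_filter_not 𝓕 (· ⊆ α), hfilter, prod_filter, ite_not]

section HierarchicalModel

variable {m : ℕ} {d : Fin m → ℕ}

abbrev Config (d : Fin m → ℕ) (γ : Finset (Fin m)) : Type := (i : {j // j ∈ γ}) → Fin (d i.1)

theorem margF_eq_fiberSum (F : Finset (Fin m)) (p : (∀ i, Fin (d i)) → ℝ) :
    margF d F p = fiberSum F.restrict p := by
  funext y
  rw [margF, fiberSum_apply]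
  simp only [funext_iff, restrict]

theorem margSub_eq_fiberSum {γ F : Finset (Fin m)} (hFγ : F ⊆ γ)
    (u : Config d γ → ℝ) :
    margSub d γ F u = fiberSum (restrict₂ (π := fun i => Fin (d i)) hFγ) u := by
  funext y
  rw [margSub, fiberSum_apply]
  refine Finset.sum_congr rfl fun x _ => ?_
  simp only [funext_iff, restrict₂, Subtype.forall]
  exact if_congr ⟨fun h i hiF => h i hiF (hFγ hiF), fun h i hiF _ => h i hiF⟩ rfl rfl

theorem margSub_margF {γ F : Finset (Fin m)} (hFγ : F ⊆ γ) (p : (∀ i, Fin (d i)) → ℝ) :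
    margSub d γ F (margF d γ p) = margF d F p := by
  rw [margSub_eq_fiberSum hFγ, margF_eq_fiberSum, margF_eq_fiberSum, fiberSum_fiberSum,
    restrict₂_comp_restrict]

theorem fiberSum_restrict₂_of_margSub_eq {γ F G : Finset (Fin m)} (hFγ : F ⊆ γ)
    (hGF : G ⊆ F) {u : Config d γ → ℝ} {p : (∀ i, Fin (d i)) → ℝ}
    (hu : margSub d γ F u = margSub d γ F (margF d γ p)) :
    fiberSum (restrict₂ (π := fun i => Fin (d i)) (hGF.trans hFγ)) u = margF d G p := by
  rw [← restrict₂_comp_restrict₂ hGF hFγ, ← fiberSum_fiberSum, ← margSub_eq_fiberSum hFγ,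
    hu, margSub_margF hFγ, margF_eq_fiberSum, margF_eq_fiberSum, fiberSum_fiberSum,
    restrict₂_comp_restrict]

theorem margF_eq_of_margSub_eq {γ F : Finset (Fin m)} (hFγ : F ⊆ γ)
    {u p : (∀ i, Fin (d i)) → ℝ} {v : Config d γ → ℝ}
    (huv : margF d γ u = v) (hv : margSub d γ F v = margSub d γ F (margF d γ p)) :
    margF d F u = margF d F p := by
  rw [← margSub_margF hFγ, huv, hv, margSub_margF hFγ]

def IsFacetProduct (d : Fin m → ℕ) (𝓕 : Finset (Finset (Fin m))) (γ : Finset (Fin m))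
    (f : Config d γ → ℝ) : Prop :=
  ∃ θ : (F : {F // F ∈ 𝓕.filter (· ⊆ γ)}) → (Config d F.1 → ℝ),
    (∀ F y, 0 < θ F y) ∧
      ∀ y, f y = ∏ F : {F // F ∈ 𝓕.filter (· ⊆ γ)},
        θ F (restrict₂ (π := fun i => Fin (d i)) (mem_filter.mp F.2).2 y)

theorem IsFacetProduct.pos {𝓕 : Finset (Finset (Fin m))} {γ : Finset (Fin m)}
    {f : Config d γ → ℝ} (hf : IsFacetProduct d 𝓕 γ f) (y) : 0 < f y := by
  obtain ⟨θ, hθ, hfθ⟩ := hf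
  rw [hfθ]
  exact Finset.prod_pos fun F _ => hθ F _

theorem mem_hierModelSub_of_eq {𝓕 : Finset (Finset (Fin m))} {γ G F₀ : Finset (Fin m)}
    (hF₀ : F₀ ∈ 𝓕) (hGF₀ : G ⊆ F₀) (hF₀γ : F₀ ⊆ γ) {f : Config d γ → ℝ}
    (hf : IsFacetProduct d 𝓕 γ f) {h : Config d G → ℝ}
    (hh : ∀ s, 0 < h s) {c : ℝ} (hc : 0 < c) {r : Config d γ → ℝ}
    (hr : r ∈ simplex _)
    (hrf : ∀ y, r y = c * f y * h (restrict₂ (π := fun i => Fin (d i)) (hGF₀.trans hF₀γ) y)) :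
    r ∈ hierModelSub d γ (𝓕.filter (· ⊆ γ)) (fun _ hF => (mem_filter.mp hF).2) := by
  obtain ⟨θ, hθ, hfθ⟩ := hf
  -- the factor `h` is absorbed into the potential of the facet `F₀`
  let η : (F : {F // F ∈ 𝓕.filter (· ⊆ γ)}) → (Config d F.1 → ℝ) :=
    fun F yF => if hF : G ⊆ F.1 ∧ F.1 = F₀ then h (restrict₂ (π := fun i => Fin (d i)) hF.1 yF)
      else 1
  have hη : ∀ y, ∏ F : {F // F ∈ 𝓕.filter (· ⊆ γ)},
      η F (restrict₂ (π := fun i => Fin (d i)) (mem_filter.mp F.2).2 y) =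
        h (restrict₂ (π := fun i => Fin (d i)) (hGF₀.trans hF₀γ) y) := by
    intro y
    rw [Fintype.prod_eq_single ⟨F₀, mem_filter.mpr ⟨hF₀, hF₀γ⟩⟩ fun F hF =>
      dif_neg fun hc => hF (Subtype.ext hc.2)]
    exact dif_pos ⟨hGF₀, rfl⟩
  refine ⟨hr, fun F yF => θ F yF * η F yF, fun F yF => mul_pos (hθ F yF) ?_, c⁻¹,
    inv_pos.mpr hc, fun y => ?_⟩
  · dsimp only [η]
    split_ifs
    exacts [hh _, one_pos]
  · rw [Finset.prod_mul_distrib]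
    exact (hrf y).trans (by rw [hfθ, ← hη, one_div, inv_inv, mul_assoc]; rfl)

theorem exists_isFacetProduct_of_mem_hierModel {𝓕 : Finset (Finset (Fin m))}
    {α β : Finset (Fin m)} (hsplit : ∀ F ∈ 𝓕, F ⊆ α ∨ F ⊆ β) {q : (∀ i, Fin (d i)) → ℝ}
    (hq : q ∈ hierModel d 𝓕) :
    ∃ (f : Config d α → ℝ) (g : Config d β → ℝ),
      IsFacetProduct d 𝓕 α f ∧ IsFacetProduct d 𝓕 β g ∧
      ∃ c > 0, ∀ x, q x = f (α.restrict x) * (c * g (β.restrict x)) := by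
  obtain ⟨-, θ, hθ, Z, hZ, hqθ⟩ := hq
  -- facets inside `α ∩ β` are counted on the `α` side only
  let θβ : (F : {F // F ∈ 𝓕.filter (· ⊆ β)}) → (Config d F.1 → ℝ) :=
    fun F yF => if F.1 ⊆ α then 1 else θ ⟨F.1, (mem_filter.mp F.2).1⟩ yF
  refine ⟨_, _, ⟨fun F => θ ⟨F.1, (mem_filter.mp F.2).1⟩,
    fun F => hθ ⟨F.1, (mem_filter.mp F.2).1⟩, fun _ => rfl⟩,
    ⟨θβ, fun F yF => ?_, fun _ => rfl⟩, 1 / Z, one_div_pos.mpr hZ, fun x => ?_⟩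
  · dsimp only [θβ]
    split_ifs
    exacts [one_pos, hθ _ _]
  let Θ : Finset (Fin m) → ℝ := fun F =>
    if hF : F ∈ 𝓕 then θ ⟨F, hF⟩ (F.restrict x) else 1
  have hall : ∏ F : {F // F ∈ 𝓕}, θ F (fun i => x i.1) = ∏ F ∈ 𝓕, Θ F :=
    prod_coe_sort_eq_prod_dite subset_rfl fun F => θ F (F.1.restrict x)
  have hα : ∏ F : {F // F ∈ 𝓕.filter (· ⊆ α)},
      θ ⟨F.1, (mem_filter.mp F.2).1⟩ (restrict₂ (π := fun i => Fin (d i)) (mem_filter.mp F.2).2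
        (α.restrict x)) = ∏ F ∈ 𝓕.filter (· ⊆ α), Θ F :=
    prod_coe_sort_eq_prod_dite (filter_subset _ _) fun F => θ F (F.1.restrict x)
  have hβ : ∏ F : {F // F ∈ 𝓕.filter (· ⊆ β)},
      θβ F (restrict₂ (π := fun i => Fin (d i)) (mem_filter.mp F.2).2 (β.restrict x)) =
        ∏ F ∈ 𝓕.filter (· ⊆ β), if F ⊆ α then 1 else Θ F := by
    rw [← prod_coe_sort (𝓕.filter (· ⊆ β))]
    refine prod_congr rfl fun F _ => ?_
    by_cases hFα : F.1 ⊆ α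
    · simp [θβ, hFα]
    · simp only [θβ, Θ, hFα, if_false, dif_pos (mem_filter.mp F.2).1]
      rfl
  rw [hqθ, hall, prod_eq_mul_prod_of_subset_or_subset hsplit, hα, hβ]
  ring

theorem divFrom_add_divFrom_le_KL_glue {𝓕 : Finset (Finset (Fin m))}
    {α β F₁ F₂ : Finset (Fin m)}
    (hunion : α ∪ β = univ) (hsplit : ∀ F ∈ 𝓕, F ⊆ α ∨ F ⊆ β)
    (hF₁ : F₁ ∈ 𝓕) (hSF₁ : α ∩ β ⊆ F₁) (hF₁α : F₁ ⊆ α)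
    (hF₂ : F₂ ∈ 𝓕) (hSF₂ : α ∩ β ⊆ F₂) (hF₂β : F₂ ⊆ β)
    {pS : Config d (α ∩ β) → ℝ} (hpS : ∀ s, 0 < pS s)
    {v : Config d α → ℝ} {w : Config d β → ℝ}
    (hv : v ∈ simplex _)
    (hvS : fiberSum (restrict₂ (π := fun i => Fin (d i)) inter_subset_left) v = pS)
    (hwS : fiberSum (restrict₂ (π := fun i => Fin (d i)) inter_subset_right) w = pS)
    {q : (∀ i, Fin (d i)) → ℝ} (hq : q ∈ hierModel d 𝓕) :
    divFrom (closure (hierModelSub d α (𝓕.filter (· ⊆ α))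
        (fun _ hF => (mem_filter.mp hF).2))) v +
      divFrom (closure (hierModelSub d β (𝓕.filter (· ⊆ β))
        (fun _ hF => (mem_filter.mp hF).2))) w ≤
      KL (glue (equivPullbackRestrict₂ hunion) pS v w) q := by
  obtain ⟨f, g, hf, hg, c, hc, hqfg⟩ := exists_isFacetProduct_of_mem_hierModel hsplit hq
  set e := equivPullbackRestrict₂ (π := fun i => Fin (d i)) hunion
  have hA : ∀ s, 0 < fiberSum (restrict₂ (π := fun i => Fin (d i)) inter_subset_left) f s :=
    fun s => fiberSum_pos_of_ne_zero hf.pos (by rw [hvS]; exact (hpS s).ne')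
  have hqe : q = fun x => f (e x).fst * (c * g (e x).snd) := funext hqfg
  have hcg : ∀ z, 0 < c * g z := fun z => mul_pos hc (hg.pos z)
  have hrY := mem_hierModelSub_of_eq hF₁ hSF₁ hF₁α hf (fun s => div_pos (hpS s) (hA s))
    one_pos (mul_div_fiberSum_mem_simplex hv (fun s => (hpS s).ne') hvS hf.pos) fun y => by ring
  have hrZ := mem_hierModelSub_of_eq hF₂ hSF₂ hF₂β hg hA hc
    (fiberSum_mul_mem_simplex e (fun y => (hf.pos y).le) (fun z => (hcg z).le)
      (hqe ▸ hq.1)) fun z => by ring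
  rw [hqe, KL_glue_eq e (fun s => (hpS s).ne') hvS hwS hf.pos hcg]
  exact add_le_add (iInf₂_le _ (subset_closure hrY)) (iInf₂_le _ (subset_closure hrZ))

end HierarchicalModel

theorem stmt14_general {m : ℕ} (d : Fin m → ℕ) (𝓕 : Finset (Finset (Fin m)))
    (α β : Finset (Fin m)) (hunion : α ∪ β = Finset.univ)
    (hsplit : ∀ F ∈ 𝓕, F ⊆ α ∨ F ⊆ β)
    (hS1 : ∃ F ∈ 𝓕, α ∩ β ⊆ F ∧ F ⊆ α)
    (hS2 : ∃ F ∈ 𝓕, α ∩ β ⊆ F ∧ F ⊆ β)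
    (p : (∀ i, Fin (d i)) → ℝ) (hpS : ∀ y, 0 < margF d (α ∩ β) p y)
    (v : ((i : {j // j ∈ α}) → Fin (d i.1)) → ℝ)
    (hv : v ∈ simplex ((i : {j // j ∈ α}) → Fin (d i.1)) ∧
      ∀ F ∈ 𝓕, F ⊆ α → margSub d α F v = margSub d α F (margF d α p))
    (w : ((i : {j // j ∈ β}) → Fin (d i.1)) → ℝ)
    (hw : w ∈ simplex ((i : {j // j ∈ β}) → Fin (d i.1)) ∧
      ∀ F ∈ 𝓕, F ⊆ β → margSub d β F w = margSub d β F (margF d β p))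
    (p' : (∀ i, Fin (d i)) → ℝ)
    (hp'max : ∀ u : (∀ i, Fin (d i)) → ℝ,
      (u ∈ simplex (∀ i, Fin (d i)) ∧ ∀ F ∈ 𝓕, margF d F u = margF d F p) →
      divFrom (closure (hierModel d 𝓕)) u ≤ divFrom (closure (hierModel d 𝓕)) p') :
    divFrom (closure (hierModelSub d α (𝓕.filter (· ⊆ α))
        (fun F hF => (Finset.mem_filter.mp hF).2))) v +
      divFrom (closure (hierModelSub d β (𝓕.filter (· ⊆ β))
        (fun F hF => (Finset.mem_filter.mp hF).2))) w ≤
      divFrom (closure (hierModel d 𝓕)) p' := by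
  obtain ⟨F₁, hF₁, hSF₁, hF₁α⟩ := hS1
  obtain ⟨F₂, hF₂, hSF₂, hF₂β⟩ := hS2
  have hvS : fiberSum (restrict₂ (π := fun i => Fin (d i)) inter_subset_left) v =
      margF d (α ∩ β) p :=
    fiberSum_restrict₂_of_margSub_eq hF₁α hSF₁ (hv.2 F₁ hF₁ hF₁α)
  have hwS : fiberSum (restrict₂ (π := fun i => Fin (d i)) inter_subset_right) w =
      margF d (α ∩ β) p :=
    fiberSum_restrict₂_of_margSub_eq hF₂β hSF₂ (hw.2 F₂ hF₂ hF₂β)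
  set e := equivPullbackRestrict₂ (π := fun i => Fin (d i)) hunion
  set u := glue e (margF d (α ∩ β) p) v w
  have huα : margF d α u = v := by
    rw [margF_eq_fiberSum]
    exact fiberSum_fst_glue e (fun s => (hpS s).ne') hwS
  have huβ : margF d β u = w := by
    rw [margF_eq_fiberSum]
    exact fiberSum_snd_glue e (fun s => (hpS s).ne') hvS
  have hu : u ∈ simplex _ ∧ ∀ F ∈ 𝓕, margF d F u = margF d F p :=
    ⟨glue_mem_simplex e hpS hv.1 hw.1 hwS, fun F hF => (hsplit F hF).elim
      (fun hFα => margF_eq_of_margSub_eq hFα huα (hv.2 F hF hFα))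
      (fun hFβ => margF_eq_of_margSub_eq hFβ huβ (hw.2 F hF hFβ))⟩
  refine le_trans ?_ (hp'max u hu)
  rw [divFrom_closure (hierModel d 𝓕)]
  exact le_iInf₂ fun q hq => divFrom_add_divFrom_le_KL_glue hunion hsplit hF₁ hSF₁ hF₁α hF₂
    hSF₂ hF₂β hpS hv.1 hvS hwS hq

/-- if `v` maximizes `D_{M_{𝓕_α}}` over `Q^α_{p_α}`, `w` maximizes
`D_{M_{𝓕_β}}` over `Q^β_{p_β}`, and `p'` maximizes `D_{M_𝓕}` over `Q_p`, then
`D_{M_𝓕}(p') ≥ D_{M_{𝓕_α}}(v) + D_{M_{𝓕_β}}(w)`. -/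
theorem stmt14 {m : ℕ} (d : Fin m → ℕ) (𝓕 : Finset (Finset (Fin m)))
    (hcov : ∀ i : Fin m, ∃ F ∈ 𝓕, i ∈ F)
    (α β : Finset (Fin m)) (hunion : α ∪ β = Finset.univ)
    (hsplit : ∀ F ∈ 𝓕, F ⊆ α ∨ F ⊆ β)
    (hS1 : ∃ F ∈ 𝓕, α ∩ β ⊆ F ∧ F ⊆ α)
    (hS2 : ∃ F ∈ 𝓕, α ∩ β ⊆ F ∧ F ⊆ β)
    (p : (∀ i, Fin (d i)) → ℝ) (hp : p ∈ simplex (∀ i, Fin (d i)))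
    (hpS : ∀ y, 0 < margF d (α ∩ β) p y)
    (v : ((i : {j // j ∈ α}) → Fin (d i.1)) → ℝ)
    (hv : v ∈ simplex ((i : {j // j ∈ α}) → Fin (d i.1)) ∧
      ∀ F ∈ 𝓕, F ⊆ α → margSub d α F v = margSub d α F (margF d α p))
    (hvmax : ∀ v' : ((i : {j // j ∈ α}) → Fin (d i.1)) → ℝ,
      (v' ∈ simplex ((i : {j // j ∈ α}) → Fin (d i.1)) ∧
        ∀ F ∈ 𝓕, F ⊆ α → margSub d α F v' = margSub d α F (margF d α p)) →
      divFrom (closure (hierModelSub d α (𝓕.filter (· ⊆ α))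
          (fun F hF => (Finset.mem_filter.mp hF).2))) v' ≤
        divFrom (closure (hierModelSub d α (𝓕.filter (· ⊆ α))
          (fun F hF => (Finset.mem_filter.mp hF).2))) v)
    (w : ((i : {j // j ∈ β}) → Fin (d i.1)) → ℝ)
    (hw : w ∈ simplex ((i : {j // j ∈ β}) → Fin (d i.1)) ∧
      ∀ F ∈ 𝓕, F ⊆ β → margSub d β F w = margSub d β F (margF d β p))
    (hwmax : ∀ w' : ((i : {j // j ∈ β}) → Fin (d i.1)) → ℝ,
      (w' ∈ simplex ((i : {j // j ∈ β}) → Fin (d i.1)) ∧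
        ∀ F ∈ 𝓕, F ⊆ β → margSub d β F w' = margSub d β F (margF d β p)) →
      divFrom (closure (hierModelSub d β (𝓕.filter (· ⊆ β))
          (fun F hF => (Finset.mem_filter.mp hF).2))) w' ≤
        divFrom (closure (hierModelSub d β (𝓕.filter (· ⊆ β))
          (fun F hF => (Finset.mem_filter.mp hF).2))) w)
    (p' : (∀ i, Fin (d i)) → ℝ)
    (hp' : p' ∈ simplex (∀ i, Fin (d i)) ∧ ∀ F ∈ 𝓕, margF d F p' = margF d F p)
    (hp'max : ∀ u : (∀ i, Fin (d i)) → ℝ,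
      (u ∈ simplex (∀ i, Fin (d i)) ∧ ∀ F ∈ 𝓕, margF d F u = margF d F p) →
      divFrom (closure (hierModel d 𝓕)) u ≤ divFrom (closure (hierModel d 𝓕)) p') :
    divFrom (closure (hierModelSub d α (𝓕.filter (· ⊆ α))
        (fun F hF => (Finset.mem_filter.mp hF).2))) v +
      divFrom (closure (hierModelSub d β (𝓕.filter (· ⊆ β))
        (fun F hF => (Finset.mem_filter.mp hF).2))) w ≤
      divFrom (closure (hierModel d 𝓕)) p' :=
  stmt14_general d 𝓕 α β hunion hsplit hS1 hS2 p hpS v hv w hw p' hp'max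
end

section
/- Let (α, S, β) be a reducible decomposition of the facet family 𝓕. Suppose p ∈ Δ_R attains the maximum divergence, i.e., D_{M_𝓕}(p) = D(M_𝓕) := sup_{u∈Δ_R} D_{M_𝓕}(u), and that the S-marginal p_S is strictly positive. If Q^α_{p_α} contains a point attaining D(M_{𝓕_α}) = sup_{u∈Δ_{R_α}} D_{M_{𝓕_α}}(u) and Q^β_{p_β} contains a point attaining D(M_{𝓕_β}), then D(M_𝓕) ≥ D(M_{𝓕_α}) + D(M_{𝓕_β}). -/
open scoped BigOperators Pointwise

attribute [local instance] Classical.propDecidable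

/-!
Glue the two maximisers `v` and `w` along their common `S`-marginal `ρ = p_S` into
`p' = v ⊗_ρ w := v(x_α) w(x_β) / ρ(x_S)`. Let `q` be in the closure of `M_𝓕` with
`supp p' ⊆ supp q`. The closure still satisfies the Markov property `q · q_S = q_α · q_β`, so
`q = a ⊗_ρ b` with `a = q_α · ρ / q_S` and `b = q_β`; since a facet of `𝓕_α` contains `S`,
the reweighting keeps `a` in the closure of `M_{𝓕_α}`, and `b` lies in the closure of
`M_{𝓕_β}`. Gluing along a fixed `ρ` is additive for the Kullback–Leibler divergence, so
`D(p' ‖ q) = D(v ‖ a) + D(w ‖ b) ≥ D_{M_{𝓕_α}}(v) + D_{M_{𝓕_β}}(w)`, whence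
`D(M_𝓕) ≥ D_{M_𝓕}(p') ≥ D(M_{𝓕_α}) + D(M_{𝓕_β})`.
-/

open Finset Function

section Simplex

variable {ι : Type*} [Fintype ι]

theorem isClosed_simplex : IsClosed (simplex ι) := by
  simp only [simplex, Set.ofPred_and, Set.ofPred_forall]
  exact (isClosed_iInter fun i => isClosed_le continuous_const (continuous_apply i)).inter
    (isClosed_eq (continuous_finsetSum _ fun i _ => continuous_apply i) continuous_const)

theorem nonempty_of_mem_simplex {p : ι → ℝ} (hp : p ∈ simplex ι) : Nonempty ι := by
  by_contra h
  rw [not_nonempty_iff] at h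
  simpa using hp.2

theorem sum_mul_pos_of_mem_simplex {u t : ι → ℝ} (hu : u ∈ simplex ι) (ht : ∀ i, 0 < t i) :
    0 < ∑ i, u i * t i := by
  obtain ⟨i, -, hi⟩ := exists_ne_zero_of_sum_ne_zero (hu.2 ▸ one_ne_zero)
  exact sum_pos' (fun i _ => mul_nonneg (hu.1 i) (ht i).le)
    ⟨i, mem_univ _, mul_pos ((hu.1 i).lt_of_ne' hi) (ht i)⟩

end Simplex

section Marginal

variable {X Y Z : Type*} [Fintype X]

noncomputable def marginal (f : X → Y) (p : X → ℝ) (y : Y) : ℝ := ∑ x with f x = y, p x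

theorem sum_marginal_mul [Fintype Y] (f : X → Y) (p : X → ℝ) (t : Y → ℝ) :
    ∑ y, marginal f p y * t y = ∑ x, p x * t (f x) := by
  rw [← sum_fiberwise univ f fun x => p x * t (f x)]
  refine sum_congr rfl fun y _ => ?_
  rw [marginal, sum_mul]
  exact sum_congr rfl fun x hx => by rw [(mem_filter.1 hx).2]

theorem sum_marginal [Fintype Y] (f : X → Y) (p : X → ℝ) : ∑ y, marginal f p y = ∑ x, p x := by
  simpa using sum_marginal_mul f p 1

theorem marginal_comp [Fintype Y] (f : X → Y) (g : Y → Z) (p : X → ℝ) :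
    marginal g (marginal f p) = marginal (g ∘ f) p := by
  funext z
  convert sum_fiberwise_eq_sum_filter univ {y | g y = z} f p using 1 <;> simp [marginal]

theorem marginal_mul_comp (f : X → Y) (p : X → ℝ) (t : Y → ℝ) :
    marginal f (fun x => p x * t (f x)) = fun y => marginal f p y * t y := by
  funext y
  rw [marginal, marginal, sum_mul]
  exact sum_congr rfl fun x hx => by rw [(mem_filter.1 hx).2]

theorem marginal_nonneg {p : X → ℝ} (hp : ∀ x, 0 ≤ p x) (f : X → Y) (y : Y) :
    0 ≤ marginal f p y :=
  sum_nonneg fun x _ => hp x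

theorem continuous_marginal (f : X → Y) : Continuous (marginal f) :=
  continuous_pi fun _ => continuous_finsetSum _ fun x _ => continuous_apply x

theorem exists_ne_zero_of_marginal_ne_zero {f : X → Y} {p : X → ℝ} {y : Y}
    (h : marginal f p y ≠ 0) : ∃ x, f x = y ∧ p x ≠ 0 := by
  obtain ⟨x, hx, hpx⟩ := exists_ne_zero_of_sum_ne_zero h
  exact ⟨x, (mem_filter.1 hx).2, hpx⟩

theorem marginal_pos_of_support {p q : X → ℝ} (hq : ∀ x, 0 ≤ q x)
    (hsupp : ∀ x, q x = 0 → p x = 0) {f : X → Y} {y : Y} (hp : marginal f p y ≠ 0) :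
    0 < marginal f q y := by
  obtain ⟨x, rfl, hpx⟩ := exists_ne_zero_of_marginal_ne_zero hp
  refine (marginal_nonneg hq f _).lt_of_ne' fun h => hpx (hsupp x ?_)
  exact (sum_eq_zero_iff_of_nonneg fun x _ => hq x).1 h x (mem_filter.2 ⟨mem_univ _, rfl⟩)

theorem marginal_pos {p : X → ℝ} (hp : ∀ x, 0 < p x) {f : X → Y} {y : Y} (hy : ∃ x, f x = y) :
    0 < marginal f p y := by
  obtain ⟨x, rfl⟩ := hy
  exact sum_pos (fun x _ => hp x) ⟨x, mem_filter.2 ⟨mem_univ _, rfl⟩⟩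

theorem marginal_mem_simplex [Fintype Y] {p : X → ℝ} (hp : p ∈ simplex X) (f : X → Y) :
    marginal f p ∈ simplex Y :=
  ⟨marginal_nonneg hp.1 f, (sum_marginal f p).trans hp.2⟩

end Marginal

section Reweight

variable {Y : Type*} [Fintype Y]

noncomputable def reweight (u t : Y → ℝ) : Y → ℝ :=
  (∑ y, u y * t y)⁻¹ • fun y => u y * t y

theorem reweight_of_sum_eq_one {u t : Y → ℝ} (h : ∑ y, u y * t y = 1) :
    reweight u t = fun y => u y * t y := by
  rw [reweight, h, inv_one, one_smul]

theorem continuousAt_reweight {u : Y → ℝ} (t : Y → ℝ) (h : ∑ y, u y * t y ≠ 0) :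
    ContinuousAt (fun u => reweight u t) u := by
  have hmul : Continuous fun u : Y → ℝ => fun y => u y * t y :=
    continuous_pi fun y => (continuous_apply y).mul continuous_const
  have hsum : Continuous fun u : Y → ℝ => ∑ y, u y * t y :=
    continuous_finsetSum _ fun y _ => (continuous_apply y).mul continuous_const
  exact (hsum.continuousAt.inv₀ h).smul hmul.continuousAt

theorem reweight_mem_simplex {u t : Y → ℝ} (hu : u ∈ simplex Y) (ht : ∀ y, 0 < t y) :
    reweight u t ∈ simplex Y := by
  have hpos := sum_mul_pos_of_mem_simplex hu ht
  refine ⟨fun y => mul_nonneg (inv_nonneg.2 hpos.le) (mul_nonneg (hu.1 y) (ht y).le), ?_⟩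
  simp only [reweight, Pi.smul_apply, smul_eq_mul, ← mul_sum, inv_mul_cancel₀ hpos.ne']

end Reweight

structure IsFiberProduct {X Y Z S : Type*} (f : X → Y) (g : X → Z) (σ : Y → S) (τ : Z → S) :
    Prop where
  comm : ∀ x, σ (f x) = τ (g x)
  injective : Injective fun x => (f x, g x)
  exists_of_eq : ∀ y z, σ y = τ z → ∃ x, f x = y ∧ g x = z

noncomputable def fiberGlue {X Y Z S : Type*} (f : X → Y) (g : X → Z) (σ : Y → S)
    (ρ : S → ℝ) (v : Y → ℝ) (w : Z → ℝ) (x : X) : ℝ :=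
  v (f x) * w (g x) / ρ (σ (f x))

namespace IsFiberProduct

variable {X Y Z S : Type*} {f : X → Y} {g : X → Z} {σ : Y → S} {τ : Z → S}
  {ρ : S → ℝ} {v a : Y → ℝ} {w b : Z → ℝ}

theorem symm (hP : IsFiberProduct f g σ τ) : IsFiberProduct g f τ σ where
  comm x := (hP.comm x).symm
  injective _ _ h := hP.injective (Prod.swap_injective h)
  exists_of_eq z y h := (hP.exists_of_eq y z h.symm).imp fun _ hx => hx.symm

theorem fiberGlue_symm (hP : IsFiberProduct f g σ τ) (ρ : S → ℝ) (v : Y → ℝ) (w : Z → ℝ) :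
    fiberGlue g f τ ρ w v = fiberGlue f g σ ρ v w := by
  funext x
  rw [fiberGlue, fiberGlue, ← hP.comm, mul_comm]

theorem eq_zero_of_fiberGlue_support [Fintype Z] (hP : IsFiberProduct f g σ τ)
    (hρ : ∀ s, ρ s ≠ 0) (hw : marginal τ w = ρ)
    (hsupp : ∀ x, fiberGlue f g σ ρ a b x = 0 → fiberGlue f g σ ρ v w x = 0)
    (y : Y) (hay : a y = 0) : v y = 0 := by
  by_contra hvy
  obtain ⟨z, hz, hwz⟩ := exists_ne_zero_of_marginal_ne_zero (f := τ) (p := w) (y := σ y)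
    (by rw [hw]; exact hρ _)
  obtain ⟨x, rfl, rfl⟩ := hP.exists_of_eq y z hz.symm
  have := hsupp x (by rw [fiberGlue, hay, zero_mul, zero_div])
  simp only [fiberGlue, div_eq_zero_iff, mul_eq_zero] at this
  tauto

variable [Fintype X]

theorem sum_filter_comp [Fintype Z] (hP : IsFiberProduct f g σ τ) (y : Y) (h : Z → ℝ) :
    ∑ x with f x = y, h (g x) = ∑ z with τ z = σ y, h z := by
  refine sum_nbij g (fun x hx => ?_) (fun x hx x' hx' hxx' => ?_) (fun z hz => ?_)
    fun _ _ => rfl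
  · simp only [mem_filter, mem_univ, true_and] at hx ⊢
    rw [← hP.comm, hx]
  · simp only [mem_coe, mem_filter, mem_univ, true_and] at hx hx'
    exact hP.injective (Prod.ext (hx.trans hx'.symm) hxx')
  · simp only [mem_coe, mem_filter, mem_univ, true_and] at hz
    obtain ⟨x, hfx, hgx⟩ := hP.exists_of_eq y z hz.symm
    exact ⟨x, by simpa using hfx, hgx⟩

theorem marginal_left_of_eq_mul [Fintype Z] (hP : IsFiberProduct f g σ τ) {q : X → ℝ}
    {A : Y → ℝ} {B : Z → ℝ} (hq : ∀ x, q x = A (f x) * B (g x)) (y : Y) :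
    marginal f q y = A y * marginal τ B (σ y) := by
  rw [marginal, marginal, mul_sum, ← hP.sum_filter_comp]
  exact sum_congr rfl fun x hx => by rw [hq, (mem_filter.1 hx).2]

theorem marginal_right_of_eq_mul [Fintype Y] (hP : IsFiberProduct f g σ τ) {q : X → ℝ}
    {A : Y → ℝ} {B : Z → ℝ} (hq : ∀ x, q x = A (f x) * B (g x)) (z : Z) :
    marginal g q z = marginal σ A (τ z) * B z := by
  rw [hP.symm.marginal_left_of_eq_mul fun x => (hq x).trans (mul_comm _ _), mul_comm]

theorem mul_marginal_eq_of_eq_mul [Fintype Y] [Fintype Z] (hP : IsFiberProduct f g σ τ)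
    {q : X → ℝ} {A : Y → ℝ} {B : Z → ℝ} (hq : ∀ x, q x = A (f x) * B (g x)) (x : X) :
    q x * marginal (σ ∘ f) q (σ (f x)) = marginal f q (f x) * marginal g q (g x) := by
  have hS : marginal (σ ∘ f) q = fun s => marginal σ A s * marginal τ B s := by
    rw [← marginal_comp, funext (hP.marginal_left_of_eq_mul hq), marginal_mul_comp]
  rw [hS, hP.marginal_left_of_eq_mul hq, hP.marginal_right_of_eq_mul hq, hq, ← hP.comm]
  ring

theorem marginal_fiberGlue_left [Fintype Z] (hP : IsFiberProduct f g σ τ)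
    (hρ : ∀ s, ρ s ≠ 0) (hw : marginal τ w = ρ) (v : Y → ℝ) :
    marginal f (fiberGlue f g σ ρ v w) = v := by
  funext y
  rw [hP.marginal_left_of_eq_mul (q := fiberGlue f g σ ρ v w) (A := fun y => v y / ρ (σ y))
    fun _ => (div_mul_eq_mul_div _ _ _).symm, hw, div_mul_cancel₀ _ (hρ _)]

theorem marginal_fiberGlue_right [Fintype Y] (hP : IsFiberProduct f g σ τ)
    (hρ : ∀ s, ρ s ≠ 0) (hv : marginal σ v = ρ) (w : Z → ℝ) :
    marginal g (fiberGlue f g σ ρ v w) = w := by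
  rw [← hP.fiberGlue_symm]
  exact hP.symm.marginal_fiberGlue_left hρ hv w

theorem fiberGlue_mem_simplex [Fintype Y] [Fintype Z] (hP : IsFiberProduct f g σ τ)
    (hρ : ∀ s, 0 < ρ s) (hv : v ∈ simplex Y) (hw₀ : ∀ z, 0 ≤ w z)
    (hw : marginal τ w = ρ) : fiberGlue f g σ ρ v w ∈ simplex X := by
  refine ⟨fun x => div_nonneg (mul_nonneg (hv.1 _) (hw₀ _)) (hρ _).le, ?_⟩
  rw [← sum_marginal f, hP.marginal_fiberGlue_left (fun s => (hρ s).ne') hw, hv.2]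

theorem KL_fiberGlue [Fintype Y] [Fintype Z] (hP : IsFiberProduct f g σ τ)
    (hρ : ∀ s, ρ s ≠ 0) (hv : marginal σ v = ρ) (hw : marginal τ w = ρ)
    (hsupp : ∀ x, fiberGlue f g σ ρ a b x = 0 → fiberGlue f g σ ρ v w x = 0) :
    KL (fiberGlue f g σ ρ v w) (fiberGlue f g σ ρ a b) = KL v a + KL w b := by
  have hva := hP.eq_zero_of_fiberGlue_support hρ hw hsupp
  have hwb := hP.symm.eq_zero_of_fiberGlue_support hρ hv
    (by simpa only [hP.fiberGlue_symm] using hsupp)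
  rw [KL, if_pos hsupp, KL, if_pos hva, KL, if_pos hwb, ← EReal.coe_add, EReal.coe_eq_coe_iff]
  set G := fiberGlue f g σ ρ v w
  have hlog : ∀ x, G x * Real.log (G x / fiberGlue f g σ ρ a b x)
      = G x * Real.log (v (f x) / a (f x)) + G x * Real.log (w (g x) / b (g x)) := by
    intro x
    by_cases hx : G x = 0
    · simp [hx]
    have hx' := hx
    simp only [G, fiberGlue, div_eq_zero_iff, mul_eq_zero, not_or] at hx'
    obtain ⟨⟨hvx, hwx⟩, hρx⟩ := hx'
    rw [← mul_add, ← Real.log_mul (div_ne_zero hvx (mt (hva _) hvx))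
      (div_ne_zero hwx (mt (hwb _) hwx))]
    simp only [G, fiberGlue]
    field_simp
  rw [sum_congr rfl fun x _ => hlog x, sum_add_distrib,
    ← sum_marginal_mul f G fun y => Real.log (v y / a y),
    ← sum_marginal_mul g G fun z => Real.log (w z / b z),
    hP.marginal_fiberGlue_left hρ hw, hP.marginal_fiberGlue_right hρ hv]

end IsFiberProduct

theorem Finset.restrict₂_surjective {ι : Type*} {π : ι → Type*} [DecidableEq ι] {s t : Finset ι}
    (hst : s ⊆ t) (x₀ : ∀ i, π i) : Surjective (restrict₂ (π := π) hst) :=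
  fun y => ⟨t.restrict (updateFinset x₀ s y), restrict_updateFinset x₀ y⟩

theorem Finset.prod_subtype_mem_filter {ι M : Type*} [CommMonoid M] (s : Finset ι) (p : ι → Prop)
    [DecidablePred p] (φ : {i // i ∈ s} → M) :
    ∏ i : {i // i ∈ s.filter p}, φ ⟨i.1, (mem_filter.1 i.2).1⟩ = ∏ i : s with p i.1, φ i :=
  prod_bij (fun i _ => ⟨i.1, (mem_filter.1 i.2).1⟩)
    (fun i _ => mem_filter.2 ⟨mem_univ _, (mem_filter.1 i.2).2⟩)
    (fun _ _ _ _ h => Subtype.ext (Subtype.mk.inj h))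
    (fun j hj => ⟨⟨j.1, mem_filter.2 ⟨j.2, (mem_filter.1 hj).2⟩⟩, mem_univ _, rfl⟩)
    fun _ _ => rfl

section HierarchicalModel

variable {m : ℕ} {d : Fin m → ℕ}

local notation "res₂" => restrict₂ (π := fun i => Fin (d i))

theorem margF_eq_marginal (F : Finset (Fin m)) (p : (∀ i, Fin (d i)) → ℝ) :
    margF d F p = marginal F.restrict p := by
  funext y
  simp only [margF, marginal, sum_filter, funext_iff, restrict]

theorem margSub_eq_marginal {γ F : Finset (Fin m)} (h : F ⊆ γ)
    (u : ((i : γ) → Fin (d i)) → ℝ) : margSub d γ F u = marginal (res₂ h) u := by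
  funext y
  simp only [margSub, marginal, sum_filter]
  refine sum_congr rfl fun _ _ => ?_
  congr 1
  exact propext ⟨fun hc => funext fun i => hc i i.2 (h i.2), fun hc i hiF _ => congrFun hc ⟨i, hiF⟩⟩

theorem marginal_eq_margF_of_margSub_eq {γ F S : Finset (Fin m)} (hFγ : F ⊆ γ) (hSF : S ⊆ F)
    {v : ((i : γ) → Fin (d i)) → ℝ} {p : (∀ i, Fin (d i)) → ℝ}
    (h : margSub d γ F v = margSub d γ F (margF d γ p)) :
    marginal (res₂ (hSF.trans hFγ)) v = margF d S p := by
  rw [margSub_eq_marginal hFγ, margSub_eq_marginal hFγ, margF_eq_marginal, marginal_comp] at h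
  have := congrArg (marginal (res₂ hSF)) h
  rw [marginal_comp, marginal_comp] at this
  rw [margF_eq_marginal]
  exact this

theorem isFiberProduct_restrict {α β : Finset (Fin m)} (hunion : α ∪ β = univ) :
    IsFiberProduct (α.restrict (π := fun i => Fin (d i))) β.restrict
      (res₂ inter_subset_left) (res₂ (inter_subset_right : α ∩ β ⊆ β)) where
  comm _ := rfl
  injective x x' h := by
    funext i
    rcases mem_union.1 (hunion ▸ mem_univ i) with hi | hi
    · exact congrFun (congrArg Prod.fst h) ⟨i, hi⟩
    · exact congrFun (congrArg Prod.snd h) ⟨i, hi⟩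
  exists_of_eq y z hyz := by
    refine ⟨fun i => if hi : i ∈ α then y ⟨i, hi⟩
      else z ⟨i, (mem_union.1 (hunion ▸ mem_univ i)).resolve_left hi⟩, ?_, ?_⟩
    · funext i
      exact dif_pos i.2
    · funext i
      by_cases hi : i.1 ∈ α
      · exact (dif_pos hi).trans (congrFun hyz ⟨i.1, mem_inter.2 ⟨hi, i.2⟩⟩)
      · exact dif_neg hi

theorem closure_hierModel_subset_simplex (𝓕 : Finset (Finset (Fin m))) :
    closure (hierModel d 𝓕) ⊆ simplex _ :=
  closure_minimal (fun _ hp => hp.1) isClosed_simplex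

theorem exists_factorization_of_mem_hierModel {𝓕 : Finset (Finset (Fin m))} {γ δ : Finset (Fin m)}
    (hsplit : ∀ F ∈ 𝓕, F ⊆ γ ∨ F ⊆ δ) {r : (∀ i, Fin (d i)) → ℝ} (hr : r ∈ hierModel d 𝓕) :
    ∃ θ : (F : {F // F ∈ 𝓕.filter (· ⊆ γ)}) → ((i : F.1) → Fin (d i)) → ℝ,
      (∀ F y, 0 < θ F y) ∧ ∃ B : ((i : δ) → Fin (d i)) → ℝ, (∀ z, 0 < B z) ∧
        ∀ x, r x = (∏ F, θ F fun i => x i.1) * B (δ.restrict x) := by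
  obtain ⟨-, θ, hθ, Z, hZ, hr⟩ := hr
  let B (z : (i : δ) → Fin (d i)) : ℝ := 1 / Z * ∏ F : 𝓕 with ¬ F.1 ⊆ γ,
    if hF : F.1 ⊆ δ then θ F (res₂ hF z) else 1
  refine ⟨fun F => θ ⟨F.1, (mem_filter.1 F.2).1⟩, fun F => hθ ⟨F.1, (mem_filter.1 F.2).1⟩, B,
    fun z => ?_, fun x => ?_⟩
  · exact mul_pos (one_div_pos.2 hZ) (prod_pos fun F _ => by split_ifs; exacts [hθ _ _, one_pos])
  · have hδ : ∏ F : 𝓕 with ¬ F.1 ⊆ γ, (θ F fun i => x i.1)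
        = ∏ F : 𝓕 with ¬ F.1 ⊆ γ, if hF : F.1 ⊆ δ then θ F (res₂ hF (δ.restrict x)) else 1 :=
      prod_congr rfl fun F hF => by
        rw [dif_pos ((hsplit F.1 F.2).resolve_left (mem_filter.1 hF).2)]
        rfl
    beta_reduce
    rw [hr, ← prod_filter_mul_prod_filter_not univ (fun F : 𝓕 => F.1 ⊆ γ),
      ← prod_subtype_mem_filter 𝓕 (· ⊆ γ) fun F => θ F fun i => x i.1, hδ]
    ring

theorem mem_hierModelSub_of_eq_mul {γ F₁ : Finset (Fin m)} {𝓕' : Finset (Finset (Fin m))}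
    (h : ∀ F ∈ 𝓕', F ⊆ γ) (hF₁ : F₁ ∈ 𝓕') {u : ((i : γ) → Fin (d i)) → ℝ}
    (hu : u ∈ simplex _) (θ : (F : {F // F ∈ 𝓕'}) → ((i : F.1) → Fin (d i)) → ℝ)
    (hθ : ∀ F y, 0 < θ F y) (k : ((i : F₁) → Fin (d i)) → ℝ) (hk : ∀ y, 0 < k y)
    (hu_eq : ∀ y, u y = (∏ F : {F // F ∈ 𝓕'}, θ F (fun i => y ⟨i.1, h F.1 F.2 i.2⟩)) *
      k (res₂ (h F₁ hF₁) y)) :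
    u ∈ hierModelSub d γ 𝓕' h := by
  refine ⟨hu, fun F yF => θ F yF * if hF : F.1 = F₁ then k (res₂ hF.ge yF) else 1,
    fun F yF => mul_pos (hθ F yF) ?_, 1, one_pos, fun y => ?_⟩
  · split_ifs
    exacts [hk _, one_pos]
  · have hk₁ : ∏ F : {F // F ∈ 𝓕'}, (if hF : F.1 = F₁ then
          k (res₂ hF.ge fun i => y ⟨i.1, h F.1 F.2 i.2⟩) else 1)
        = k (res₂ (h F₁ hF₁) y) := by
      rw [Fintype.prod_eq_single ⟨F₁, hF₁⟩ fun F hF => dif_neg fun h => hF (Subtype.ext h),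
        dif_pos rfl]
      rfl
    rw [hu_eq, one_div_one, one_mul, prod_mul_distrib, hk₁]

theorem reweight_mem_hierModelSub {γ F₁ : Finset (Fin m)} {𝓕' : Finset (Finset (Fin m))}
    {h : ∀ F ∈ 𝓕', F ⊆ γ} {u : ((i : γ) → Fin (d i)) → ℝ} (hu : u ∈ hierModelSub d γ 𝓕' h)
    (hF₁ : F₁ ∈ 𝓕') {k : ((i : F₁) → Fin (d i)) → ℝ} (hk : ∀ y, 0 < k y) :
    reweight u (fun y => k (res₂ (h F₁ hF₁) y)) ∈ hierModelSub d γ 𝓕' h := by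
  obtain ⟨hsimp, θ, hθ, Z, hZ, hform⟩ := hu
  have hc := sum_mul_pos_of_mem_simplex hsimp fun y => hk (res₂ (h F₁ hF₁) y)
  refine mem_hierModelSub_of_eq_mul h hF₁ (reweight_mem_simplex hsimp fun y => hk _) θ hθ
    (fun yF => ((∑ y, u y * k (res₂ (h F₁ hF₁) y)) * Z)⁻¹ * k yF)
    (fun yF => mul_pos (inv_pos.2 (mul_pos hc hZ)) (hk yF)) fun y => ?_
  rw [reweight, Pi.smul_apply, smul_eq_mul, hform]
  field_simp

theorem mul_mem_closure_hierModelSub {γ F₁ : Finset (Fin m)} {𝓕' : Finset (Finset (Fin m))}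
    {h : ∀ F ∈ 𝓕', F ⊆ γ} {u : ((i : γ) → Fin (d i)) → ℝ}
    (hu : u ∈ closure (hierModelSub d γ 𝓕' h)) (hF₁ : F₁ ∈ 𝓕')
    {k : ((i : F₁) → Fin (d i)) → ℝ} (hk : ∀ y, 0 < k y)
    (hsum : ∑ y, u y * k (res₂ (h F₁ hF₁) y) = 1) :
    (fun y => u y * k (res₂ (h F₁ hF₁) y)) ∈ closure (hierModelSub d γ 𝓕' h) := by
  rw [← reweight_of_sum_eq_one hsum]
  exact (continuousAt_reweight _ (hsum ▸ one_ne_zero)).continuousWithinAt.mem_closure hu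
    fun _ hu' => reweight_mem_hierModelSub hu' hF₁ hk

theorem margF_mem_hierModelSub {𝓕 : Finset (Finset (Fin m))} {γ δ F₁ : Finset (Fin m)}
    (hunion : γ ∪ δ = univ) (hsplit : ∀ F ∈ 𝓕, F ⊆ γ ∨ F ⊆ δ) (hF₁ : F₁ ∈ 𝓕)
    (hSF₁ : γ ∩ δ ⊆ F₁) (hF₁γ : F₁ ⊆ γ) {r : (∀ i, Fin (d i)) → ℝ} (hr : r ∈ hierModel d 𝓕) :
    margF d γ r ∈ hierModelSub d γ (𝓕.filter (· ⊆ γ)) (fun _ hF => (mem_filter.1 hF).2) := by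
  obtain ⟨x₀⟩ := nonempty_of_mem_simplex hr.1
  obtain ⟨θ, hθ, B, hB, hrAB⟩ := exists_factorization_of_mem_hierModel hsplit hr
  rw [margF_eq_marginal]
  refine mem_hierModelSub_of_eq_mul _ (mem_filter.2 ⟨hF₁, hF₁γ⟩) (marginal_mem_simplex hr.1 _)
    θ hθ (fun yF => marginal (res₂ inter_subset_right) B (res₂ hSF₁ yF))
    (fun yF => marginal_pos hB (restrict₂_surjective _ x₀ _)) fun y => ?_
  exact (isFiberProduct_restrict hunion).marginal_left_of_eq_mul
    (A := fun y => ∏ F, θ F fun i => y ⟨i.1, (mem_filter.1 F.2).2 i.2⟩) hrAB y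

theorem margF_mem_closure_hierModelSub {𝓕 : Finset (Finset (Fin m))} {γ δ F₁ : Finset (Fin m)}
    (hunion : γ ∪ δ = univ) (hsplit : ∀ F ∈ 𝓕, F ⊆ γ ∨ F ⊆ δ) (hF₁ : F₁ ∈ 𝓕)
    (hSF₁ : γ ∩ δ ⊆ F₁) (hF₁γ : F₁ ⊆ γ) {q : (∀ i, Fin (d i)) → ℝ}
    (hq : q ∈ closure (hierModel d 𝓕)) :
    margF d γ q ∈ closure (hierModelSub d γ (𝓕.filter (· ⊆ γ))
      (fun _ hF => (mem_filter.1 hF).2)) := by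
  rw [margF_eq_marginal]
  refine (continuous_marginal _).continuousWithinAt.mem_closure hq fun r hr => ?_
  rw [← margF_eq_marginal]
  exact margF_mem_hierModelSub hunion hsplit hF₁ hSF₁ hF₁γ hr

-- The Markov property is a closed condition, so it passes from the model to its closure.
theorem mul_margF_inter_eq_of_mem_closure {𝓕 : Finset (Finset (Fin m))} {α β : Finset (Fin m)}
    (hunion : α ∪ β = univ) (hsplit : ∀ F ∈ 𝓕, F ⊆ α ∨ F ⊆ β) {q : (∀ i, Fin (d i)) → ℝ}
    (hq : q ∈ closure (hierModel d 𝓕)) (x : ∀ i, Fin (d i)) :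
    q x * margF d (α ∩ β) q ((α ∩ β).restrict x)
      = margF d α q (α.restrict x) * margF d β q (β.restrict x) := by
  simp only [margF_eq_marginal]
  refine closure_minimal (t := {q | ∀ x, q x * marginal (α ∩ β).restrict q ((α ∩ β).restrict x)
      = marginal α.restrict q (α.restrict x) * marginal β.restrict q (β.restrict x)})
    (fun r hr => ?_) ?_ hq x
  · obtain ⟨θ, -, B, -, hrAB⟩ := exists_factorization_of_mem_hierModel hsplit hr
    exact (isFiberProduct_restrict hunion).mul_marginal_eq_of_eq_mul
      (A := fun y => ∏ F, θ F fun i => y ⟨i.1, (mem_filter.1 F.2).2 i.2⟩) hrAB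
  · simp only [Set.ofPred_forall]
    have hmarg {Y : Type} [Fintype Y] (f : (∀ i, Fin (d i)) → Y) (y : Y) :
        Continuous fun q => marginal f q y :=
      (continuous_apply y).comp (continuous_marginal f)
    refine isClosed_iInter fun x => isClosed_eq ?_ ?_
    · exact (continuous_apply x).mul (hmarg _ _)
    · exact (hmarg _ _).mul (hmarg _ _)

theorem eq_fiberGlue_of_mem_closure {𝓕 : Finset (Finset (Fin m))} {α β : Finset (Fin m)}
    (hunion : α ∪ β = univ) (hsplit : ∀ F ∈ 𝓕, F ⊆ α ∨ F ⊆ β) {q : (∀ i, Fin (d i)) → ℝ}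
    (hq : q ∈ closure (hierModel d 𝓕)) {ρ : ((i : ↥(α ∩ β)) → Fin (d i)) → ℝ}
    (hρ : ∀ s, ρ s ≠ 0) (hqS : ∀ s, margF d (α ∩ β) q s ≠ 0) :
    q = fiberGlue (α.restrict (π := fun i => Fin (d i))) β.restrict (res₂ inter_subset_left) ρ
      (fun y => margF d α q y *
        (ρ (res₂ inter_subset_left y) / margF d (α ∩ β) q (res₂ inter_subset_left y)))
      (margF d β q) := by
  funext x
  have hx := mul_margF_inter_eq_of_mem_closure hunion hsplit hq x
  have := hqS ((α ∩ β).restrict x)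
  have := hρ ((α ∩ β).restrict x)
  change q x = margF d α q (α.restrict x) * (ρ ((α ∩ β).restrict x) /
    margF d (α ∩ β) q ((α ∩ β).restrict x)) * margF d β q (β.restrict x) /
      ρ ((α ∩ β).restrict x)
  field_simp
  linear_combination hx

theorem divFrom_add_divFrom_le_KL_fiberGlue {𝓕 : Finset (Finset (Fin m))}
    {α β F₁ F₂ : Finset (Fin m)} (hunion : α ∪ β = univ) (hsplit : ∀ F ∈ 𝓕, F ⊆ α ∨ F ⊆ β)
    (hF₁ : F₁ ∈ 𝓕) (hSF₁ : α ∩ β ⊆ F₁) (hF₁α : F₁ ⊆ α)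
    (hF₂ : F₂ ∈ 𝓕) (hSF₂ : α ∩ β ⊆ F₂) (hF₂β : F₂ ⊆ β)
    {ρ : ((i : ↥(α ∩ β)) → Fin (d i)) → ℝ} (hρ : ∀ s, 0 < ρ s)
    {v : ((i : α) → Fin (d i)) → ℝ} (hv : v ∈ simplex _)
    (hvρ : marginal (res₂ inter_subset_left) v = ρ) {w : ((i : β) → Fin (d i)) → ℝ}
    (hwρ : marginal (res₂ inter_subset_right) w = ρ)
    {q : (∀ i, Fin (d i)) → ℝ} (hq : q ∈ closure (hierModel d 𝓕)) :
    divFrom (closure (hierModelSub d α (𝓕.filter (· ⊆ α)) fun _ hF => (mem_filter.1 hF).2)) v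
      + divFrom (closure (hierModelSub d β (𝓕.filter (· ⊆ β)) fun _ hF => (mem_filter.1 hF).2)) w
      ≤ KL (fiberGlue (α.restrict (π := fun i => Fin (d i))) β.restrict
          (res₂ inter_subset_left) ρ v w) q := by
  have hP := isFiberProduct_restrict (d := d) hunion
  by_cases hsupp : ∀ x, q x = 0 → fiberGlue (α.restrict (π := fun i => Fin (d i))) β.restrict
      (res₂ inter_subset_left) ρ v w x = 0
  swap
  · rw [KL, if_neg hsupp]
    exact le_top
  have hqS : ∀ s, 0 < margF d (α ∩ β) q s := fun s => by
    rw [margF_eq_marginal]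
    refine marginal_pos_of_support (closure_hierModel_subset_simplex 𝓕 hq).1 hsupp ?_
    rw [← restrict₂_comp_restrict inter_subset_left, ← marginal_comp,
      hP.marginal_fiberGlue_left (fun s => (hρ s).ne') hwρ, hvρ]
    exact (hρ s).ne'
  let k (s : (i : ↥(α ∩ β)) → Fin (d i)) : ℝ := ρ s / margF d (α ∩ β) q s
  have hq_eq := eq_fiberGlue_of_mem_closure hunion hsplit hq (fun s => (hρ s).ne')
    fun s => (hqS s).ne'
  have hsum : ∑ y, margF d α q y * k (res₂ inter_subset_left y) = 1 :=
    calc ∑ y, margF d α q y * k (res₂ inter_subset_left y)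
        = ∑ s, margF d (α ∩ β) q s * k s := by
          rw [margF_eq_marginal, margF_eq_marginal, sum_marginal_mul, sum_marginal_mul]
          rfl
      _ = ∑ s, ρ s := sum_congr rfl fun s _ => mul_div_cancel₀ _ (hqS s).ne'
      _ = 1 := by rw [← hvρ, sum_marginal, hv.2]
  have ha := mul_mem_closure_hierModelSub
    (margF_mem_closure_hierModelSub hunion hsplit hF₁ hSF₁ hF₁α hq) (mem_filter.2 ⟨hF₁, hF₁α⟩)
    (k := fun yF => k (res₂ hSF₁ yF)) (fun _ => div_pos (hρ _) (hqS _)) hsum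
  have hb := margF_mem_closure_hierModelSub ((union_comm β α).trans hunion)
    (fun F hF => (hsplit F hF).symm) hF₂ (inter_comm β α ▸ hSF₂) hF₂β hq
  rw [hq_eq] at hsupp ⊢
  rw [hP.KL_fiberGlue (fun s => (hρ s).ne') hvρ hwρ hsupp]
  exact add_le_add (iInf₂_le _ ha) (iInf₂_le _ hb)

end HierarchicalModel

theorem stmt15_general {m : ℕ} (d : Fin m → ℕ) (𝓕 : Finset (Finset (Fin m)))
    (α β : Finset (Fin m)) (hunion : α ∪ β = Finset.univ)
    (hsplit : ∀ F ∈ 𝓕, F ⊆ α ∨ F ⊆ β)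
    (hS1 : ∃ F ∈ 𝓕, α ∩ β ⊆ F ∧ F ⊆ α)
    (hS2 : ∃ F ∈ 𝓕, α ∩ β ⊆ F ∧ F ⊆ β)
    (p : (∀ i, Fin (d i)) → ℝ)
    (hpS : ∀ y, 0 < margF d (α ∩ β) p y)
    (hα : ∃ v : ((i : {j // j ∈ α}) → Fin (d i.1)) → ℝ,
      (v ∈ simplex ((i : {j // j ∈ α}) → Fin (d i.1)) ∧
        ∀ F ∈ 𝓕, F ⊆ α → margSub d α F v = margSub d α F (margF d α p)) ∧
      divFrom (closure (hierModelSub d α (𝓕.filter (· ⊆ α))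
          (fun F hF => (Finset.mem_filter.mp hF).2))) v =
        ⨆ u ∈ simplex ((i : {j // j ∈ α}) → Fin (d i.1)),
          divFrom (closure (hierModelSub d α (𝓕.filter (· ⊆ α))
            (fun F hF => (Finset.mem_filter.mp hF).2))) u)
    (hβ : ∃ w : ((i : {j // j ∈ β}) → Fin (d i.1)) → ℝ,
      (w ∈ simplex ((i : {j // j ∈ β}) → Fin (d i.1)) ∧
        ∀ F ∈ 𝓕, F ⊆ β → margSub d β F w = margSub d β F (margF d β p)) ∧
      divFrom (closure (hierModelSub d β (𝓕.filter (· ⊆ β))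
          (fun F hF => (Finset.mem_filter.mp hF).2))) w =
        ⨆ u ∈ simplex ((i : {j // j ∈ β}) → Fin (d i.1)),
          divFrom (closure (hierModelSub d β (𝓕.filter (· ⊆ β))
            (fun F hF => (Finset.mem_filter.mp hF).2))) u) :
    (⨆ u ∈ simplex ((i : {j // j ∈ α}) → Fin (d i.1)),
        divFrom (closure (hierModelSub d α (𝓕.filter (· ⊆ α))
          (fun F hF => (Finset.mem_filter.mp hF).2))) u) +
      (⨆ u ∈ simplex ((i : {j // j ∈ β}) → Fin (d i.1)),
        divFrom (closure (hierModelSub d β (𝓕.filter (· ⊆ β))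
          (fun F hF => (Finset.mem_filter.mp hF).2))) u) ≤
      ⨆ u ∈ simplex (∀ i, Fin (d i)), divFrom (closure (hierModel d 𝓕)) u := by
  obtain ⟨F₁, hF₁, hSF₁, hF₁α⟩ := hS1
  obtain ⟨F₂, hF₂, hSF₂, hF₂β⟩ := hS2
  obtain ⟨v, ⟨hv, hvp⟩, hvmax⟩ := hα
  obtain ⟨w, ⟨hw, hwp⟩, hwmax⟩ := hβ
  have hvρ := marginal_eq_margF_of_margSub_eq hF₁α hSF₁ (hvp F₁ hF₁ hF₁α)
  have hwρ := marginal_eq_margF_of_margSub_eq hF₂β hSF₂ (hwp F₂ hF₂ hF₂β)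
  let p' := fiberGlue (α.restrict (π := fun i => Fin (d i))) β.restrict
    (restrict₂ (π := fun i => Fin (d i)) inter_subset_left) (margF d (α ∩ β) p) v w
  rw [← hvmax, ← hwmax]
  calc _ ≤ divFrom (closure (hierModel d 𝓕)) p' := le_iInf₂ fun q hq =>
        divFrom_add_divFrom_le_KL_fiberGlue hunion hsplit hF₁ hSF₁ hF₁α hF₂ hSF₂ hF₂β hpS hv
          hvρ hwρ hq
    _ ≤ _ := le_iSup₂ (f := fun u _ => divFrom (closure (hierModel d 𝓕)) u) p'
        ((isFiberProduct_restrict hunion).fiberGlue_mem_simplex hpS hv hw.1 hwρ)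

/-- if `p` attains the maximum divergence `D(M_𝓕)`, has strictly positive
`S`-marginal, and `Q^α_{p_α}` (resp. `Q^β_{p_β}`) contains a point attaining `D(M_{𝓕_α})`
(resp. `D(M_{𝓕_β})`), then `D(M_𝓕) ≥ D(M_{𝓕_α}) + D(M_{𝓕_β})`. -/
theorem stmt15 {m : ℕ} (d : Fin m → ℕ) (𝓕 : Finset (Finset (Fin m)))
    (hcov : ∀ i : Fin m, ∃ F ∈ 𝓕, i ∈ F)
    (α β : Finset (Fin m)) (hunion : α ∪ β = Finset.univ)
    (hsplit : ∀ F ∈ 𝓕, F ⊆ α ∨ F ⊆ β)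
    (hS1 : ∃ F ∈ 𝓕, α ∩ β ⊆ F ∧ F ⊆ α)
    (hS2 : ∃ F ∈ 𝓕, α ∩ β ⊆ F ∧ F ⊆ β)
    (p : (∀ i, Fin (d i)) → ℝ) (hp : p ∈ simplex (∀ i, Fin (d i)))
    (hpmax : divFrom (closure (hierModel d 𝓕)) p =
      ⨆ u ∈ simplex (∀ i, Fin (d i)), divFrom (closure (hierModel d 𝓕)) u)
    (hpS : ∀ y, 0 < margF d (α ∩ β) p y)
    (hα : ∃ v : ((i : {j // j ∈ α}) → Fin (d i.1)) → ℝ,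
      (v ∈ simplex ((i : {j // j ∈ α}) → Fin (d i.1)) ∧
        ∀ F ∈ 𝓕, F ⊆ α → margSub d α F v = margSub d α F (margF d α p)) ∧
      divFrom (closure (hierModelSub d α (𝓕.filter (· ⊆ α))
          (fun F hF => (Finset.mem_filter.mp hF).2))) v =
        ⨆ u ∈ simplex ((i : {j // j ∈ α}) → Fin (d i.1)),
          divFrom (closure (hierModelSub d α (𝓕.filter (· ⊆ α))
            (fun F hF => (Finset.mem_filter.mp hF).2))) u)
    (hβ : ∃ w : ((i : {j // j ∈ β}) → Fin (d i.1)) → ℝ,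
      (w ∈ simplex ((i : {j // j ∈ β}) → Fin (d i.1)) ∧
        ∀ F ∈ 𝓕, F ⊆ β → margSub d β F w = margSub d β F (margF d β p)) ∧
      divFrom (closure (hierModelSub d β (𝓕.filter (· ⊆ β))
          (fun F hF => (Finset.mem_filter.mp hF).2))) w =
        ⨆ u ∈ simplex ((i : {j // j ∈ β}) → Fin (d i.1)),
          divFrom (closure (hierModelSub d β (𝓕.filter (· ⊆ β))
            (fun F hF => (Finset.mem_filter.mp hF).2))) u) :
    (⨆ u ∈ simplex ((i : {j // j ∈ α}) → Fin (d i.1)),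
        divFrom (closure (hierModelSub d α (𝓕.filter (· ⊆ α))
          (fun F hF => (Finset.mem_filter.mp hF).2))) u) +
      (⨆ u ∈ simplex ((i : {j // j ∈ β}) → Fin (d i.1)),
        divFrom (closure (hierModelSub d β (𝓕.filter (· ⊆ β))
          (fun F hF => (Finset.mem_filter.mp hF).2))) u) ≤
      ⨆ u ∈ simplex (∀ i, Fin (d i)), divFrom (closure (hierModel d 𝓕)) u :=
  stmt15_general d 𝓕 α β hunion hsplit hS1 hS2 p hpS hα hβ
end
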